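/- A vector v ∈ ℤ^N belongs to L(g,s) if and only if: (a) v_0 + v_1 + ⋯ + v_{N−1} = 0; (b) v_j is even for every inert coordinate j with 2g+2 ≤ j ≤ N−1; and (c) the ramified coordinates v_0, v_1, …, v_{2g+1} are all congruent to each other modulo 2. -/

import Mathlib

/-- The generator `w_k = 2e_k - 2e_0` in `ℤ^N`. -/
def wv (N k : ℕ) : Fin N → ℤ :=
  fun j => (if (j : ℕ) = k then 2 else 0) + (if (j : ℕ) = 0 then -2 else 0)

/-- The generator `u = -(2g+1)e_0 + e_1 + ⋯ + e_{2g+1}` in `ℤ^(2g+2+s)`. -/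
def uv (g s : ℕ) : Fin (2*g+2+s) → ℤ :=
  fun j => if (j : ℕ) = 0 then -(2*(g : ℤ)+1) else if (j : ℕ) ≤ 2*g+1 then 1 else 0

/-- The split hyperelliptic function field lattice `L(g,s)`, spanned by
`w_1, …, w_{2g+1+s}` and `u`. -/
def hyperL (g s : ℕ) : Submodule ℤ (Fin (2*g+2+s) → ℤ) :=
  Submodule.span ℤ
    ({uv g s} ∪ {v | ∃ k, 1 ≤ k ∧ k ≤ 2*g+1+s ∧ v = wv (2*g+2+s) k})

lemma filter_eq_Icc (N g : ℕ) (hN : 2*g+2 ≤ N) :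
    (Finset.range N).filter (fun k => 1 ≤ k ∧ k ≤ 2*g+1) = Finset.Icc 1 (2*g+1) := by
  ext k; simp only [Finset.mem_filter, Finset.mem_range, Finset.mem_Icc]; omega

lemma sum_split (N g : ℕ) (hN : 2*g+2 ≤ N) (a b : ℤ) :
    (∑ j : Fin N, (if (j:ℕ) = 0 then a else if (j:ℕ) ≤ 2*g+1 then b else 0))
      = a + (2*(g:ℤ)+1) * b := by
  rw [Fin.sum_univ_eq_sum_range (fun k => if k = 0 then a else if k ≤ 2*g+1 then b else 0)]
  have h1 : ∀ k, (if k = 0 then a else if k ≤ 2*g+1 then b else 0)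
      = (if k = 0 then a else 0) + (if 1 ≤ k ∧ k ≤ 2*g+1 then b else 0) := by
    intro k; split_ifs <;> omega
  rw [Finset.sum_congr rfl (fun k _ => h1 k), Finset.sum_add_distrib,
      Finset.sum_ite_eq' (Finset.range N) 0 (fun _ => a), ← Finset.sum_filter,
      filter_eq_Icc N g hN, Finset.sum_const, Nat.card_Icc]
  simp only [Finset.mem_range, show 0 < N by omega, if_true, nsmul_eq_mul]
  push_cast; ring

def hypM (g s : ℕ) : Submodule ℤ (Fin (2*g+2+s) → ℤ) where
  carrier := {v | (∑ j, v j = 0) ∧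
      (∀ j : Fin (2*g+2+s), 2*g+2 ≤ (j : ℕ) → Even (v j)) ∧
      (∀ j k : Fin (2*g+2+s), (j : ℕ) ≤ 2*g+1 → (k : ℕ) ≤ 2*g+1 →
        v j ≡ v k [ZMOD 2])}
  zero_mem' := by
    refine ⟨by simp, fun j _ => Even.zero, fun j k _ _ => Int.ModEq.refl 0⟩
  add_mem' := by
    rintro a b ⟨ha1, ha2, ha3⟩ ⟨hb1, hb2, hb3⟩
    refine ⟨?_, fun j hj => (ha2 j hj).add (hb2 j hj),
      fun j k hj hk => (ha3 j k hj hk).add (hb3 j k hj hk)⟩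
    simp only [Pi.add_apply, Finset.sum_add_distrib, ha1, hb1, add_zero]
  smul_mem' := by
    rintro z a ⟨ha1, ha2, ha3⟩
    refine ⟨?_, fun j hj => (ha2 j hj).mul_left z,
      fun j k hj hk => (ha3 j k hj hk).mul_left z⟩
    simp only [Pi.smul_apply, smul_eq_mul, ← Finset.mul_sum, ha1, mul_zero]

lemma even_modeq {a b : ℤ} (ha : Even a) (hb : Even b) : a ≡ b [ZMOD 2] := by
  rw [Int.even_iff] at ha hb
  simp only [Int.ModEq]; omega

lemma uv_mem (g s : ℕ) : uv g s ∈ hypM g s := by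
  refine ⟨?_, ?_, ?_⟩
  · exact (sum_split (2*g+2+s) g (by omega) _ 1).trans (by ring)
  · intro j hj
    simp only [uv]
    rw [if_neg (by omega), if_neg (by omega)]
    exact Even.zero
  · intro j k hj hk
    simp only [uv]
    split_ifs <;> simp only [Int.ModEq] <;> omega

lemma wv_even (N k : ℕ) (j : Fin N) : Even (wv N k j) := by
  simp only [wv]; split_ifs <;> decide

lemma wv_mem (g s k : ℕ) (h1 : 1 ≤ k) (h2 : k ≤ 2*g+1+s) :
    wv (2*g+2+s) k ∈ hypM g s := by
  refine ⟨?_, fun j _ => wv_even _ _ j, fun j j' _ _ => even_modeq (wv_even _ _ _) (wv_even _ _ _)⟩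
  show (∑ j : Fin (2*g+2+s), ((if (j:ℕ) = k then (2:ℤ) else 0) + (if (j:ℕ) = 0 then -2 else 0))) = 0
  rw [Finset.sum_add_distrib,
    Fin.sum_univ_eq_sum_range (fun i => if i = k then (2:ℤ) else 0),
    Fin.sum_univ_eq_sum_range (fun i => if i = 0 then (-2:ℤ) else 0),
    Finset.sum_ite_eq' (Finset.range (2*g+2+s)) k (fun _ => (2:ℤ)),
    Finset.sum_ite_eq' (Finset.range (2*g+2+s)) 0 (fun _ => (-2:ℤ))]
  rw [if_pos (by simp only [Finset.mem_range]; omega), if_pos (by simp only [Finset.mem_range]; omega)]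
  ring

/-- A vector `v ∈ ℤ^N` belongs to `L(g,s)` iff (a) its coordinates sum to `0`;
(b) `v_j` is even for every inert coordinate `j` (i.e. `2g+2 ≤ j ≤ N-1`); and
(c) the ramified coordinates `v_0, …, v_{2g+1}` are all congruent mod `2`. -/
theorem stmt4 (g s : ℕ) (hg : 1 ≤ g) (v : Fin (2*g+2+s) → ℤ) :
    v ∈ hyperL g s ↔
      (∑ j, v j = 0) ∧
      (∀ j : Fin (2*g+2+s), 2*g+2 ≤ (j : ℕ) → Even (v j)) ∧
      (∀ j k : Fin (2*g+2+s), (j : ℕ) ≤ 2*g+1 → (k : ℕ) ≤ 2*g+1 →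
        v j ≡ v k [ZMOD 2]) := by
  constructor
  · intro hv
    have hle : hyperL g s ≤ hypM g s := by
      rw [hyperL, Submodule.span_le]
      rintro x (hx | ⟨k, hk1, hk2, rfl⟩)
      · rw [Set.mem_singleton_iff] at hx; subst hx; exact uv_mem g s
      · exact wv_mem g s k hk1 hk2
    exact hle hv
  · rintro ⟨hsum, heven, hcong⟩
    set i0 : Fin (2*g+2+s) := ⟨0, by omega⟩ with hi0def
    set i1 : Fin (2*g+2+s) := ⟨1, by omega⟩ with hi1def
    set d : Fin (2*g+2+s) → ℤ :=
      fun j => if (j:ℕ) = 0 then 0 else if (j:ℕ) ≤ 2*g+1 then v j - v i1 else v j with hd_def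
    have hd : ∀ j, 2 ∣ d j := by
      intro j
      simp only [hd_def]
      split_ifs with h1 h2
      · exact dvd_zero 2
      · exact (hcong i1 j (by simp [hi1def]) h2).dvd
      · exact (heven j (by omega)).two_dvd
    set c : Fin (2*g+2+s) → ℤ := fun j => d j / 2 with hc_def
    have h2c : ∀ j, 2 * c j = d j := fun j => Int.mul_ediv_cancel' (hd j)
    have hdsum : (∑ j, d j) = -(v i0) + (2*(g:ℤ)+1) * (-(v i1)) := by
      have he : ∀ j : Fin (2*g+2+s), d j = v j +
          (if (j:ℕ) = 0 then -(v i0) else if (j:ℕ) ≤ 2*g+1 then -(v i1) else 0) := by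
        intro j
        simp only [hd_def]
        split_ifs with h1 h2
        · have : j = i0 := Fin.ext (by simp [hi0def, h1])
          rw [this]; ring
        · ring
        · ring
      rw [Finset.sum_congr rfl (fun j _ => he j), Finset.sum_add_distrib, hsum,
        sum_split (2*g+2+s) g (by omega) (-(v i0)) (-(v i1))]
      ring
    have hv' : v = v i1 • uv g s + ∑ j : Fin (2*g+2+s), c j • wv (2*g+2+s) (j:ℕ) := by
      funext i
      simp only [Pi.add_apply, Pi.smul_apply, smul_eq_mul, Finset.sum_apply, wv, uv]
      rw [Finset.sum_congr rfl (fun j _ => mul_add (c j) _ _), Finset.sum_add_distrib]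
      have hfirst : (∑ j : Fin (2*g+2+s), c j * (if (i:ℕ) = (j:ℕ) then (2:ℤ) else 0))
          = c i * 2 := by
        simp only [mul_ite, mul_zero, Fin.val_eq_val]
        rw [Finset.sum_ite_eq Finset.univ i (fun j => c j * 2)]
        simp
      rw [hfirst]
      by_cases hi : (i:ℕ) = 0
      · simp only [hi, if_pos]
        have hci : c i = 0 := by simp only [hc_def, hd_def, hi] <;> simp
        have hsnd : (∑ j : Fin (2*g+2+s), c j * (-2 : ℤ)) = -(∑ j, d j) := by
          rw [← Finset.sum_mul]
          have : (∑ j, c j) * (-2:ℤ) = -(2 * ∑ j, c j) := by ring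
          rw [this, Finset.mul_sum, Finset.sum_congr rfl (fun j _ => h2c j)]
        rw [hsnd, hdsum, hci]
        have : i = i0 := Fin.ext (by simp [hi0def, hi])
        rw [this]
        ring
      · simp only [hi, if_neg, if_false, mul_zero, Finset.sum_const_zero, add_zero]
        have hci : c i * 2 = d i := by rw [mul_comm]; exact h2c i
        rw [hci]
        simp only [hd_def, hi, if_false]
        split_ifs with h2
        · ring
        · ring
    rw [hv']
    refine Submodule.add_mem _
      (Submodule.smul_mem _ _ (Submodule.subset_span (Set.mem_union_left _ rfl)))
      (Submodule.sum_mem _ fun j _ => ?_)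
    by_cases hj : (j:ℕ) = 0
    · have hcj : c j = 0 := by simp only [hc_def, hd_def, hj] <;> simp
      rw [hcj, zero_smul]; exact Submodule.zero_mem _
    · refine Submodule.smul_mem _ _ (Submodule.subset_span (Set.mem_union_right _ ?_))
      exact ⟨(j:ℕ), by omega, by have := j.isLt; omega, rfl⟩
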